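/- If A is a liminal C*-algebra, then the primitive ideal space Prim(A) with the hull-kernel topology is a T₁-space: every singleton is closed. -/

import Mathlib

universe u

/-- A `⋆`-representation of a C⋆-algebra `A` on a complex Hilbert space. -/
structure CStarRep (A : Type u) [NonUnitalCStarAlgebra A] : Type (u + 1) where
  /-- The underlying Hilbert space of the representation. -/
  carrier : Type u
  [normedAddCommGroup : NormedAddCommGroup carrier]
  [innerProductSpace : InnerProductSpace ℂ carrier]
  [completeSpace : CompleteSpace carrier]
  /-- The `⋆`-homomorphism into the bounded operators. -/
  toFun : A →⋆ₙₐ[ℂ] (carrier →L[ℂ] carrier)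

attribute [instance] CStarRep.normedAddCommGroup CStarRep.innerProductSpace CStarRep.completeSpace

/-- A representation is (topologically) irreducible if it is nonzero and the only closed
subspaces of `H` invariant under `π(A)` are `0` and `H`. -/
def CStarRep.IsIrreducible {A : Type u} [NonUnitalCStarAlgebra A] (π : CStarRep A) : Prop :=
  π.toFun ≠ 0 ∧
    ∀ K : Submodule ℂ π.carrier, IsClosed (K : Set π.carrier) →
      (∀ a : A, ∀ x ∈ K, π.toFun a x ∈ K) → K = ⊥ ∨ K = ⊤

/-- The kernel of a representation, as a subset of `A`. -/
def CStarRep.ker {A : Type u} [NonUnitalCStarAlgebra A] (π : CStarRep A) : Set A :=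
  {a : A | π.toFun a = 0}

/-- A primitive ideal is the kernel of an irreducible `⋆`-representation. -/
def IsPrimitiveIdeal {A : Type u} [NonUnitalCStarAlgebra A] (I : Set A) : Prop :=
  ∃ π : CStarRep A, π.IsIrreducible ∧ π.ker = I

/-- The primitive ideal space `Prim(A)` of a C⋆-algebra `A`. -/
def PrimSpace (A : Type u) [NonUnitalCStarAlgebra A] : Type u :=
  {I : Set A // IsPrimitiveIdeal I}

/-- The hull-kernel (Jacobson) topology on `Prim(A)`: the open sets are generated by the sets
`U_J = {P ∈ Prim(A) : J ⊄ P}`; equivalently, the closure of `W ⊆ Prim(A)` is the set of all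
primitive ideals containing `⋂ W`. -/
instance (A : Type u) [NonUnitalCStarAlgebra A] : TopologicalSpace (PrimSpace A) :=
  TopologicalSpace.generateFrom {U | ∃ J : Set A, U = {P : PrimSpace A | ¬ J ⊆ P.1}}

/-- A C⋆-algebra is liminal if every irreducible representation maps onto exactly the compact
operators: `π(A) = K(H)`. -/
def IsLiminal (A : Type u) [NonUnitalCStarAlgebra A] : Prop :=
  ∀ π : CStarRep A, π.IsIrreducible →
    Set.range ⇑π.toFun = {T : π.carrier →L[ℂ] π.carrier | IsCompactOperator T}

/-!
Let `P = ker π ⊆ Q = ker ρ` with `π, ρ` irreducible and `π(A) = K(H)`. Kernel inclusion gives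
`‖ρ x‖ ≤ ‖π x‖` (by functional calculus), so `ρ` is continuous for the seminorm `‖π ·‖`. If some
`a ∈ Q` had `π a ≠ 0`, then `π(A a A)` would contain every rank-one operator, whose span is dense
in `K(H) = π(A)`; as `ρ` kills `A a A`, it would vanish on all of `A`. Hence `P = Q`: primitive
ideals are pairwise incomparable, which is the closedness of points in the hull-kernel topology.
-/

open InnerProductSpace

theorem InnerProductSpace.isCompactOperator_rankOne {𝕜 E F : Type*} [RCLike 𝕜]
    [NormedAddCommGroup E] [InnerProductSpace 𝕜 E] [NormedAddCommGroup F] [NormedSpace 𝕜 F]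
    (x : F) (y : E) : IsCompactOperator (rankOne 𝕜 x y) :=
  (isCompactOperator_of_locallyCompactSpace_dom (innerSL 𝕜 y)).clm_comp
    (ContinuousLinearMap.toSpanSingleton 𝕜 x)

theorem Submodule.norm_sub_starProjection_comp_le {𝕜 E F : Type*} [RCLike 𝕜]
    [NormedAddCommGroup E] [NormedSpace 𝕜 E] [NormedAddCommGroup F] [InnerProductSpace 𝕜 F]
    {U : Submodule 𝕜 F} [U.HasOrthogonalProjection] (T : E →L[𝕜] F) {ε : ℝ} (hε : 0 ≤ ε)
    (h : ∀ z, ‖z‖ = 1 → ∃ y ∈ U, ‖T z - y‖ ≤ ε) :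
    ‖T - U.starProjection ∘L T‖ ≤ ε := by
  refine ContinuousLinearMap.opNorm_le_of_unit_norm hε fun z hz => ?_
  obtain ⟨y, hyU, hy⟩ := h z hz
  have hmin : ‖T z - U.starProjection (T z)‖ ≤ ‖T z - y‖ := by
    rw [U.starProjection_minimal]
    exact ciInf_le ⟨0, Set.forall_mem_range.2 fun _ => norm_nonneg _⟩ (⟨y, hyU⟩ : U)
  exact hmin.trans hy

section CompactOperators

variable {𝕜 E F : Type*} [RCLike 𝕜] [NormedAddCommGroup E] [InnerProductSpace 𝕜 E]
  [NormedAddCommGroup F] [InnerProductSpace 𝕜 F] [CompleteSpace E] [CompleteSpace F]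

theorem Submodule.starProjection_comp_mem_span_rankOne (U : Submodule 𝕜 F)
    [FiniteDimensional 𝕜 U] (T : E →L[𝕜] F) :
    U.starProjection ∘L T ∈ Submodule.span 𝕜 (Set.range fun p : F × E => rankOne 𝕜 p.1 p.2) := by
  rw [(stdOrthonormalBasis 𝕜 U).starProjection_eq_sum_rankOne,
    ← ContinuousLinearMap.compL_apply, map_sum, sum_apply]
  refine Submodule.sum_mem _ fun i _ => ?_
  rw [ContinuousLinearMap.compL_apply, rankOne_comp]
  exact Submodule.subset_span
    (Set.mem_range_self (f := fun p : F × E => rankOne 𝕜 p.1 p.2) (_, _))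

theorem IsCompactOperator.mem_closure_span_rankOne {T : E →L[𝕜] F} (hT : IsCompactOperator T) :
    T ∈ closure (Submodule.span 𝕜 (Set.range fun p : F × E => rankOne 𝕜 p.1 p.2) : Set _) := by
  refine Metric.mem_closure_iff.2 fun ε hε => ?_
  obtain ⟨t, ht, hcover⟩ := Metric.totallyBounded_iff.1
    (hT.isCompact_closure_image_closedBall 1).totallyBounded (ε / 2) (half_pos hε)
  have : FiniteDimensional 𝕜 (Submodule.span 𝕜 t) := FiniteDimensional.span_of_finite 𝕜 ht
  refine ⟨_, (Submodule.span 𝕜 t).starProjection_comp_mem_span_rankOne T, ?_⟩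
  rw [dist_eq_norm]
  refine (Submodule.norm_sub_starProjection_comp_le T (half_pos hε).le fun z hz => ?_).trans_lt
    (half_lt_self hε)
  obtain ⟨y, hyt, hy⟩ := Set.mem_iUnion₂.1 <| hcover (subset_closure ⟨z, by simp [hz], rfl⟩)
  exact ⟨y, Submodule.subset_span hyt, (mem_ball_iff_norm.1 hy).le⟩

end CompactOperators

theorem InnerProductSpace.exists_mul_mul_eq_rankOne {𝕜 H A F : Type*} [RCLike 𝕜]
    [NormedAddCommGroup H] [InnerProductSpace 𝕜 H] [Mul A] [FunLike F A (H →L[𝕜] H)]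
    [MulHomClass F A (H →L[𝕜] H)] (π : F) (hπ : ∀ x y : H, rankOne 𝕜 x y ∈ Set.range π)
    {a : A} (ha : π a ≠ 0) (u w : H) : ∃ b c : A, π (b * a * c) = rankOne 𝕜 u w := by
  obtain ⟨v, hv⟩ : ∃ v, π a v ≠ 0 := by
    by_contra! h
    exact ha (ContinuousLinearMap.ext h)
  set ζ := π a v
  obtain ⟨b, hb⟩ := hπ (((‖ζ‖ : 𝕜) ^ 2)⁻¹ • u) ζ
  obtain ⟨c, hc⟩ := hπ v w
  refine ⟨b, c, ?_⟩
  have hζ : (‖ζ‖ : 𝕜) ^ 2 ≠ 0 := by simpa using hv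
  -- `rankOne u' ζ ∘ π a ∘ rankOne v w = ⟪ζ, π a v⟫ • rankOne u' w = ‖ζ‖² • rankOne u' w`
  rw [map_mul, map_mul, hb, hc, ContinuousLinearMap.mul_def, ContinuousLinearMap.mul_def,
    ContinuousLinearMap.comp_assoc, comp_rankOne, rankOne_comp_rankOne,
    inner_self_eq_norm_sq_to_K]
  ext z
  simp [smul_smul, hζ]

open scoped CStarAlgebra in
theorem norm_map_le_of_ker_subset {A B C : Type*} [NonUnitalCStarAlgebra A]
    [NonUnitalCStarAlgebra B] [NonUnitalCStarAlgebra C] (φ : A →⋆ₙₐ[ℂ] B) (ψ : A →⋆ₙₐ[ℂ] C)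
    (h : ∀ x, φ x = 0 → ψ x = 0) (x : A) : ‖ψ x‖ ≤ ‖φ x‖ := by
  suffices hsa : ∀ c : A, IsSelfAdjoint c → ‖ψ c‖ ≤ ‖φ c‖ by
    have := hsa (star x * x) (.star_mul_self x)
    simp only [map_mul, map_star, CStarRing.norm_star_mul_self] at this
    exact mul_self_le_mul_self_iff (norm_nonneg _) (norm_nonneg _) |>.mpr this
  intro c hc
  set r := ‖φ c‖
  -- Clamping to `[-r, r]` fixes `φ c`, whose spectrum lies there; since `ψ` sees only what `φ`
  -- sees, it also fixes `ψ c`, which forces `‖ψ c‖ ≤ r`.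
  set g : ℝ → ℝ := fun t => max (-r) (min t r)
  have hφ : φ (cfcₙ g c) = φ c := by
    rw [φ.map_cfcₙ g c (hφa := hc.map φ)]
    conv_rhs => rw [← cfcₙ_id' ℝ (φ c)]
    refine cfcₙ_congr fun t ht => ?_
    have ht_le : ‖t‖ ≤ r := by
      simpa only [cfcₙ_id' ℝ (φ c) (hc.map φ)] using
        norm_apply_le_norm_cfcₙ (fun t : ℝ => t) (φ c) ht (ha := hc.map φ)
    obtain ⟨hrt, htr⟩ := abs_le.1 ht_le
    simp only [g, min_eq_left htr, max_eq_right hrt]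
  have hψ : cfcₙ g (ψ c) = ψ c := by
    rw [← ψ.map_cfcₙ g c (hφa := hc.map ψ), ← sub_eq_zero, ← map_sub]
    exact h _ (by rw [map_sub, hφ, sub_self])
  rw [← hψ]
  exact norm_cfcₙ_le fun t _ => abs_le.2
    ⟨le_max_left _ _, max_le (neg_le_self (norm_nonneg _)) (min_le_right _ _)⟩

theorem apply_eq_zero_of_ker_subset_of_range_eq_compact {A B H : Type*}
    [NonUnitalCStarAlgebra A] [NonUnitalCStarAlgebra B] [NormedAddCommGroup H]
    [InnerProductSpace ℂ H] [CompleteSpace H] (π : A →⋆ₙₐ[ℂ] (H →L[ℂ] H)) (ρ : A →⋆ₙₐ[ℂ] B)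
    (hπ : Set.range π = {T : H →L[ℂ] H | IsCompactOperator T}) (hker : ∀ x, π x = 0 → ρ x = 0)
    (hρ : ρ ≠ 0) {a : A} (ha : ρ a = 0) : π a = 0 := by
  by_contra hπa
  apply hρ
  ext b
  set S := (LinearMap.ker (ρ : A →ₗ[ℂ] B)).map (π : A →ₗ[ℂ] (H →L[ℂ] H))
  have hrankOne : ∀ u w : H, rankOne ℂ u w ∈ Set.range π := fun u w => by
    rw [hπ]
    exact isCompactOperator_rankOne u w
  have hspan : Submodule.span ℂ (Set.range fun p : H × H => rankOne ℂ p.1 p.2) ≤ S := by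
    refine Submodule.span_le.2 ?_
    rintro _ ⟨⟨u, w⟩, rfl⟩
    obtain ⟨x, y, hxy⟩ := exists_mul_mul_eq_rankOne π hrankOne hπa u w
    exact ⟨x * a * y, by simp [ha], hxy⟩
  have hb : π b ∈ closure (S : Set (H →L[ℂ] H)) := by
    have hcompact : IsCompactOperator (π b) := by
      have : π b ∈ Set.range π := ⟨b, rfl⟩
      rwa [hπ] at this
    exact closure_mono hspan hcompact.mem_closure_span_rankOne
  have hdist : ∀ T ∈ S, ‖ρ b‖ ≤ dist (π b) T := by
    rintro _ ⟨y, hy, rfl⟩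
    calc ‖ρ b‖ = ‖ρ (b - y)‖ := by rw [map_sub, show ρ y = 0 from hy, sub_zero]
      _ ≤ ‖π (b - y)‖ := norm_map_le_of_ker_subset π ρ hker _
      _ = dist (π b) (π y) := by rw [map_sub, dist_eq_norm]
  refine norm_le_zero_iff.1 (le_of_forall_pos_lt_add fun ε hε => ?_)
  obtain ⟨T, hT, hbT⟩ := Metric.mem_closure_iff.1 hb ε hε
  linarith [hdist T hT]

theorem PrimSpace.eq_of_subset {A : Type u} [NonUnitalCStarAlgebra A] (hA : IsLiminal A)
    {P Q : PrimSpace A} (h : P.1 ⊆ Q.1) : P = Q := by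
  rcases P with ⟨_, π, hπ, rfl⟩
  rcases Q with ⟨_, ρ, hρ, rfl⟩
  refine Subtype.ext (Set.Subset.antisymm h fun a ha => ?_)
  exact apply_eq_zero_of_ker_subset_of_range_eq_compact π.toFun ρ.toFun (hA π hπ)
    (fun x hx => h hx) hρ.1 ha

/-- If `A` is a liminal C⋆-algebra, then the primitive ideal space `Prim(A)`
with the hull-kernel topology is a T₁-space. -/
theorem primSpace_t1Space_of_isLiminal {A : Type u} [NonUnitalCStarAlgebra A]
    (hA : IsLiminal A) : T1Space (PrimSpace A) := by
  refine ⟨fun P => ?_⟩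
  have hcompl : ({P}ᶜ : Set (PrimSpace A)) = {Q | ¬ P.1 ⊆ Q.1} := by
    ext Q
    refine ⟨fun hQ hPQ => hQ (PrimSpace.eq_of_subset hA hPQ).symm, ?_⟩
    rintro hPQ rfl
    exact hPQ subset_rfl
  rw [← isOpen_compl_iff, hcompl]
  exact TopologicalSpace.isOpen_generateFrom_of_mem ⟨P.1, rfl⟩
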